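/- (Laurent-series leading term of the reduced susceptance inverse) Let B be the susceptance matrix of a connected weighted graph partitioned into loads and inverters, and K_I diagonal with strictly negative entries K_1,…,K_m. For ε > 0 the matrix B_{red,ε} := B_LL − B_LI(B_II + εK_I)^{−1}B_IL is negative definite (hence invertible), and ε·B_{red,ε}^{−1} converges to (∑_{i=1}^m K_i)^{−1}·1_{n×n} as ε → 0⁺, where 1_{n×n} is the n×n all-ones matrix. -/

import Mathlib

/-!
`-B` is a weighted graph Laplacian: its quadratic form is `½ ∑ B_ij (x_i - x_j)²`, which is
nonnegative and, the graph being connected, vanishes only on constant vectors. Grounding the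
inverter nodes through `-ε K_I` therefore makes `-(B + diag(0, ε K_I))` positive definite, and
`-B_{red,ε}` is its Schur complement, hence positive definite as well.

For the limit, the zero row sums of `B` give `B_{red,ε} 1 = ε w_ε` with
`w_ε = -B_LI (B_II + ε K_I)⁻¹ K_I 1 → w₀` and `1 ⬝ w₀ = ∑ K_i`, while
`W_ε = B_{red,ε} - 1 1ᵀ` is still invertible at `ε = 0` because `ker B_{red,0}` is spanned by `1`.
The Sherman–Morrison formula for the rank-one update `B_{red,ε} = W_ε + 1 1ᵀ` reads
`ε B_{red,ε}⁻¹ = ε W_ε⁻¹ - (n / 1ᵀ W_ε⁻¹ w_ε) W_ε⁻¹ 1 1ᵀ W_ε⁻¹`, and `W₀⁻¹ 1 = -(1/n) 1` turns the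
limit of the right-hand side into `(∑ K_i)⁻¹ 1 1ᵀ`.
-/

open Matrix Filter Topology
open scoped ComplexOrder

def suscGraph {V : Type*} (B : Matrix V V ℝ) : SimpleGraph V where
  Adj i j := i ≠ j ∧ 0 < B i j ∧ 0 < B j i
  symm := ⟨fun _ _ h => ⟨h.1.symm, h.2.2, h.2.1⟩⟩
  loopless := ⟨fun _ h => h.1 rfl⟩

def IsSusceptance {V : Type*} [Fintype V] [DecidableEq V] (B : Matrix V V ℝ) : Prop :=
  B.IsSymm ∧ (∀ i j, i ≠ j → 0 ≤ B i j) ∧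
    (∀ i, B i i = -∑ j ∈ Finset.univ.erase i, B i j) ∧ (suscGraph B).Connected

namespace IsSusceptance

variable {V : Type*} [Fintype V] [DecidableEq V] {B : Matrix V V ℝ}

theorem sum_row_eq_zero (hB : IsSusceptance B) (i : V) : ∑ j, B i j = 0 := by
  rw [← Finset.add_sum_erase _ _ (Finset.mem_univ i), hB.2.2.1 i, neg_add_cancel]

theorem mulVec_one (hB : IsSusceptance B) : B *ᵥ 1 = 0 := by
  ext i
  simpa [mulVec, dotProduct] using hB.sum_row_eq_zero i

theorem isHermitian (hB : IsSusceptance B) : B.IsHermitian := by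
  rw [IsHermitian, conjTranspose_eq_transpose_of_trivial]
  exact hB.1

theorem dotProduct_neg_mulVec (hB : IsSusceptance B) (x : V → ℝ) :
    x ⬝ᵥ (-B *ᵥ x) = 2⁻¹ * ∑ i, ∑ j, B i j * (x i - x j) ^ 2 := by
  have hcol (j : V) : ∑ i, B i j = 0 := by
    simpa only [hB.1.apply] using hB.sum_row_eq_zero j
  calc x ⬝ᵥ (-B *ᵥ x) = -∑ i, x i * ∑ j, B i j * x j := by
        simp [dotProduct, mulVec]
    _ = 2⁻¹ * (∑ i, (∑ j, B i j) * x i ^ 2 + ∑ j, (∑ i, B i j) * x j ^ 2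
          - 2 * ∑ i, x i * ∑ j, B i j * x j) := by
        simp only [hB.sum_row_eq_zero, hcol, zero_mul, Finset.sum_const_zero]
        ring
    _ = 2⁻¹ * ∑ i, ∑ j, B i j * (x i - x j) ^ 2 := by
        congr 1
        rw [show ∑ j, (∑ i, B i j) * x j ^ 2 = ∑ i, ∑ j, B i j * x j ^ 2 by
          simp only [Finset.sum_mul]; exact Finset.sum_comm]
        simp only [Finset.sum_mul, Finset.mul_sum, ← Finset.sum_add_distrib,
          ← Finset.sum_sub_distrib]
        exact Finset.sum_congr rfl fun i _ => Finset.sum_congr rfl fun j _ => by ring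

theorem mul_sq_sub_nonneg (hB : IsSusceptance B) (x : V → ℝ) (i j : V) :
    0 ≤ B i j * (x i - x j) ^ 2 := by
  rcases eq_or_ne i j with rfl | hij
  · simp
  · exact mul_nonneg (hB.2.1 i j hij) (sq_nonneg _)

theorem posSemidef_neg (hB : IsSusceptance B) : (-B).PosSemidef := by
  refine .of_dotProduct_mulVec_nonneg hB.isHermitian.neg fun x => ?_
  rw [star_trivial, hB.dotProduct_neg_mulVec]
  exact mul_nonneg (by norm_num) <| Finset.sum_nonneg fun i _ =>
    Finset.sum_nonneg fun j _ => hB.mul_sq_sub_nonneg x i j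

theorem eq_smul_one_of_dotProduct_neg_mulVec_eq_zero (hB : IsSusceptance B) {x : V → ℝ}
    (hx : x ⬝ᵥ (-B *ᵥ x) = 0) (v : V) : x = x v • 1 := by
  have hsum : ∑ i, ∑ j, B i j * (x i - x j) ^ 2 = 0 := by
    rw [hB.dotProduct_neg_mulVec] at hx
    linarith
  have hadj {a b : V} (hab : (suscGraph B).Adj a b) : x a = x b := by
    have hterm : B a b * (x a - x b) ^ 2 = 0 := by
      rw [Fintype.sum_eq_zero_iff_of_nonneg fun i => Finset.sum_nonneg fun j _ =>
        hB.mul_sq_sub_nonneg x i j] at hsum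
      exact congrFun ((Fintype.sum_eq_zero_iff_of_nonneg (hB.mul_sq_sub_nonneg x a)).1
        (congrFun hsum a)) b
    have := (mul_eq_zero.1 hterm).resolve_left hab.2.1.ne'
    linarith [pow_eq_zero_iff two_ne_zero |>.1 this]
  ext j
  obtain ⟨p⟩ := hB.2.2.2.preconnected j v
  simp only [Pi.smul_apply, Pi.one_apply, smul_eq_mul, mul_one]
  induction p with
  | nil => rfl
  | cons h _ ih => exact (hadj h).trans ih

theorem posDef_neg_add (hB : IsSusceptance B) {P : Matrix V V ℝ} (hP : P.PosSemidef)
    (hP1 : 1 ⬝ᵥ (P *ᵥ 1) ≠ 0) : (-B + P).PosDef := by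
  refine .of_dotProduct_mulVec_pos (hB.isHermitian.neg.add hP.1) fun x hx => ?_
  rw [star_trivial, add_mulVec, dotProduct_add]
  have hBx := hB.posSemidef_neg.dotProduct_mulVec_nonneg x
  have hPx := hP.dotProduct_mulVec_nonneg x
  rw [star_trivial] at hBx hPx
  rcases hBx.lt_or_eq with hBx | hBx
  · linarith
  obtain ⟨i, hi⟩ := Function.ne_iff.1 hx
  have hPx' : x ⬝ᵥ (P *ᵥ x) ≠ 0 := by
    rw [hB.eq_smul_one_of_dotProduct_neg_mulVec_eq_zero hBx.symm i, mulVec_smul, smul_dotProduct,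
      dotProduct_smul, smul_eq_mul, smul_eq_mul]
    exact mul_ne_zero hi (mul_ne_zero hi hP1)
  linarith [hPx.lt_of_ne hPx'.symm]

theorem posDef_neg_add_diagonal (hB : IsSusceptance B) {d : V → ℝ} (hd : 0 ≤ d)
    (hd' : ∑ i, d i ≠ 0) : (-B + diagonal d).PosDef :=
  hB.posDef_neg_add (.diagonal hd) (by simpa [mulVec_diagonal, one_dotProduct] using hd')

theorem posDef_neg_add_vecMulVec (hB : IsSusceptance B) {a : V → ℝ} (ha : ∑ i, a i ≠ 0) :
    (-B + vecMulVec a a).PosDef :=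
  hB.posDef_neg_add (posSemidef_vecMulVec_self_star a) (by
    rw [vecMulVec_mulVec, op_smul_eq_smul, dotProduct_smul, smul_eq_mul, dotProduct_one,
      one_dotProduct]
    exact mul_ne_zero ha ha)

end IsSusceptance

theorem Filter.Tendsto.matrix_inv {ι α K : Type*} [Fintype ι] [DecidableEq ι] [Field K]
    [TopologicalSpace K] [IsTopologicalRing K] [ContinuousInv₀ K] {l : Filter α}
    {f : α → Matrix ι ι K} {M : Matrix ι ι K} (hf : Tendsto f l (𝓝 M)) (hM : M.det ≠ 0) :
    Tendsto (fun a => (f a)⁻¹) l (𝓝 M⁻¹) :=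
  have hinv : ContinuousAt Ring.inverse M.det := by
    rw [Ring.inverse_eq_inv']
    exact continuousAt_inv₀ hM
  (continuousAt_matrix_inv M hinv).tendsto.comp hf

namespace Matrix

section SchurComplement

variable {ι κ : Type*} [Fintype κ] [DecidableEq κ]

theorem PosDef.of_fromBlocks₂₂ [Fintype ι] [DecidableEq ι] {𝕜 : Type*} [RCLike 𝕜]
    {A : Matrix ι ι 𝕜} {B : Matrix ι κ 𝕜} {D : Matrix κ κ 𝕜}
    (h : (fromBlocks A B Bᴴ D).PosDef) : (A - B * D⁻¹ * Bᴴ).PosDef := by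
  have hD : D.PosDef := h.submatrix Sum.inr_injective
  have := hD.isUnit.invertible
  refine ((PosDef.fromBlocks₂₂ A B hD).1 h.posSemidef).posDef_iff_det_ne_zero.2 fun h0 => ?_
  have hdet := h.det_pos
  rw [det_fromBlocks₂₂, invOf_eq_nonsing_inv, h0, mul_zero] at hdet
  exact hdet.false

variable {K : Type*} [Field K]

/-- The paper's `B_{red,ε}` is `kronReduction B (ε • K_I)`. -/
noncomputable def kronReduction (B : Matrix (ι ⊕ κ) (ι ⊕ κ) K) (Q : Matrix κ κ K) :
    Matrix ι ι K :=
  B.toBlocks₁₁ - B.toBlocks₁₂ * (B.toBlocks₂₂ + Q)⁻¹ * B.toBlocks₂₁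

theorem kronReduction_mulVec_one [Fintype ι] {B : Matrix (ι ⊕ κ) (ι ⊕ κ) K} (hB : B *ᵥ 1 = 0)
    {Q : Matrix κ κ K} (hQ : IsUnit (B.toBlocks₂₂ + Q).det) :
    kronReduction B Q *ᵥ 1 = -(B.toBlocks₁₂ * (B.toBlocks₂₂ + Q)⁻¹) *ᵥ (Q *ᵥ 1) := by
  have h₁ : B.toBlocks₁₁ *ᵥ 1 + B.toBlocks₁₂ *ᵥ 1 = 0 := by
    ext i
    simpa [mulVec, dotProduct, Fintype.sum_sum_type, toBlocks₁₁, toBlocks₁₂] using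
      congrFun hB (Sum.inl i)
  have h₂ : B.toBlocks₂₁ *ᵥ 1 = -((B.toBlocks₂₂ + Q) *ᵥ 1 - Q *ᵥ 1) := by
    rw [add_mulVec, add_sub_cancel_right, eq_neg_iff_add_eq_zero]
    ext i
    simpa [mulVec, dotProduct, Fintype.sum_sum_type, toBlocks₂₁, toBlocks₂₂] using
      congrFun hB (Sum.inr i)
  rw [kronReduction, sub_mulVec, ← mulVec_mulVec, ← mulVec_mulVec, h₂, mulVec_neg, mulVec_sub,
    mulVec_mulVec (M := (B.toBlocks₂₂ + Q)⁻¹), nonsing_inv_mul _ hQ, one_mulVec, neg_mulVec,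
    ← mulVec_mulVec, mulVec_neg, mulVec_sub]
  linear_combination h₁

theorem one_vecMul_toBlocks₁₂_mul_inv [Fintype ι] {B : Matrix (ι ⊕ κ) (ι ⊕ κ) K}
    (hB : B.IsSymm) (hB1 : B *ᵥ 1 = 0) (hD : IsUnit B.toBlocks₂₂.det) :
    1 ᵥ* (B.toBlocks₁₂ * B.toBlocks₂₂⁻¹) = -1 := by
  have hcol : 1 ᵥ* B.toBlocks₁₂ + 1 ᵥ* B.toBlocks₂₂ = 0 := by
    ext j
    simpa [vecMul, dotProduct, Fintype.sum_sum_type, toBlocks₁₂, toBlocks₂₂] using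
      congrFun (show 1 ᵥ* B = 0 by rw [← mulVec_transpose, hB.eq, hB1]) (Sum.inr j)
  rw [← vecMul_vecMul, eq_neg_of_add_eq_zero_left hcol, neg_vecMul, vecMul_vecMul,
    mul_nonsing_inv _ hD, vecMul_one]

theorem IsSymm.kronReduction {B : Matrix (ι ⊕ κ) (ι ⊕ κ) K} (hB : B.IsSymm)
    {Q : Matrix κ κ K} (hQ : Q.IsSymm) : (kronReduction B Q).IsSymm := by
  obtain ⟨h₁₁, h₁₂, h₂₁, h₂₂⟩ := isSymm_fromBlocks_iff.1 (B.fromBlocks_toBlocks.symm ▸ hB)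
  unfold IsSymm Matrix.kronReduction
  rw [transpose_sub, transpose_mul, transpose_mul, transpose_nonsing_inv,
    transpose_add, h₁₁.eq, h₁₂, h₂₁, h₂₂.eq, hQ.eq, Matrix.mul_assoc]

theorem isUnit_det_toBlocks₂₂_add {B : Matrix (ι ⊕ κ) (ι ⊕ κ) ℝ} {P : Matrix ι ι ℝ}
    {Q : Matrix κ κ ℝ} (h : (-B + fromBlocks P 0 0 (-Q)).PosDef) :
    IsUnit (B.toBlocks₂₂ + Q).det := by
  have hD : (-(B.toBlocks₂₂ + Q)).PosDef := by
    convert h.submatrix Sum.inr_injective using 1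
    ext i j
    simp [toBlocks₂₂, add_comm]
  exact (isUnit_iff_isUnit_det _).1 ((IsUnit.neg_iff _).1 hD.isUnit)

theorem posDef_sub_kronReduction [Fintype ι] [DecidableEq ι] {B : Matrix (ι ⊕ κ) (ι ⊕ κ) ℝ}
    (hB : B.IsSymm) {P : Matrix ι ι ℝ} {Q : Matrix κ κ ℝ}
    (h : (-B + fromBlocks P 0 0 (-Q)).PosDef) : (P - kronReduction B Q).PosDef := by
  have hinv : (-(B.toBlocks₂₂ + Q))⁻¹ = -(B.toBlocks₂₂ + Q)⁻¹ :=
    inv_eq_left_inv (by rw [neg_mul_neg, nonsing_inv_mul _ (isUnit_det_toBlocks₂₂_add h)])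
  obtain ⟨-, h₁₂, -, -⟩ := isSymm_fromBlocks_iff.1 (B.fromBlocks_toBlocks.symm ▸ hB)
  have hblocks : -B + fromBlocks P 0 0 (-Q) = fromBlocks (P - B.toBlocks₁₁) (-B.toBlocks₁₂)
      (-B.toBlocks₁₂)ᴴ (-(B.toBlocks₂₂ + Q)) := by
    conv_lhs => rw [← B.fromBlocks_toBlocks]
    rw [fromBlocks_neg, fromBlocks_add, conjTranspose_eq_transpose_of_trivial, transpose_neg, h₁₂]
    congr 1 <;> abel
  have hschur : P - kronReduction B Q = (P - B.toBlocks₁₁) -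
      (-B.toBlocks₁₂) * (-(B.toBlocks₂₂ + Q))⁻¹ * (-B.toBlocks₁₂)ᴴ := by
    rw [hinv, kronReduction, conjTranspose_eq_transpose_of_trivial, transpose_neg, h₁₂]
    simp only [Matrix.neg_mul, Matrix.mul_neg, neg_neg]
    abel
  rw [hschur]
  exact (hblocks ▸ h).of_fromBlocks₂₂

end SchurComplement

section RankOne

variable {ι K : Type*} [Fintype ι] [DecidableEq ι] [Field K]

theorem inv_mulVec_eq_inv_smul {M : Matrix ι ι K} (hM : IsUnit M.det) {u : ι → K} {c : K}
    (hc : c ≠ 0) (h : M *ᵥ u = c • u) : M⁻¹ *ᵥ u = c⁻¹ • u := by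
  rw [← inv_smul_smul₀ hc (M⁻¹ *ᵥ u), ← mulVec_smul, ← h, mulVec_mulVec, nonsing_inv_mul _ hM,
    one_mulVec]

theorem vecMul_inv_eq_inv_smul {M : Matrix ι ι K} (hM : IsUnit M.det) {u : ι → K} {c : K}
    (hc : c ≠ 0) (h : u ᵥ* M = c • u) : u ᵥ* M⁻¹ = c⁻¹ • u := by
  rw [← inv_smul_smul₀ hc (u ᵥ* M⁻¹), ← smul_vecMul, ← h, vecMul_vecMul, mul_nonsing_inv _ hM,
    vecMul_one]

/-- Sherman–Morrison, with the denominator `1 + uᵀ W⁻¹ u` rewritten as `ε (uᵀ W⁻¹ w) / (uᵀ u)`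
so that the right-hand side stays bounded as `ε → 0`. -/
theorem smul_inv_add_vecMulVec_self {W : Matrix ι ι K} (hW : IsUnit W.det) {u w : ι → K}
    {ε : K} (hε : ε ≠ 0) (hu : (W + vecMulVec u u) *ᵥ u = ε • w)
    (hφ : u ⬝ᵥ (W⁻¹ *ᵥ w) ≠ 0) :
    ε • (W + vecMulVec u u)⁻¹ =
      ε • W⁻¹ - ((u ⬝ᵥ u) / (u ⬝ᵥ (W⁻¹ *ᵥ w))) • (W⁻¹ * vecMulVec u u * W⁻¹) := by
  set φ := u ⬝ᵥ (W⁻¹ *ᵥ w)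
  set a := u ⬝ᵥ (W⁻¹ *ᵥ u)
  have hscalar : (u ⬝ᵥ u) * (1 + a) = ε * φ := by
    have h := congrArg (fun v => u ⬝ᵥ (W⁻¹ *ᵥ v)) hu
    simp only [add_mulVec, vecMulVec_mulVec, op_smul_eq_smul, mulVec_add, mulVec_smul,
      mulVec_mulVec, nonsing_inv_mul _ hW, one_mulVec, dotProduct_add, dotProduct_smul,
      smul_eq_mul] at h
    linear_combination h
  have h₁ : (W + vecMulVec u u) * W⁻¹ = 1 + vecMulVec u u * W⁻¹ := by
    rw [Matrix.add_mul, mul_nonsing_inv _ hW]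
  have h₂ : (W + vecMulVec u u) * (W⁻¹ * vecMulVec u u * W⁻¹) =
      (1 + a) • (vecMulVec u u * W⁻¹) := by
    rw [← Matrix.mul_assoc, ← Matrix.mul_assoc, h₁, Matrix.add_mul, Matrix.one_mul,
      vecMulVec_mul, vecMulVec_mul_vecMulVec, ← dotProduct_mulVec, add_smul, one_smul,
      Matrix.add_mul, vecMulVec_mul, vecMulVec_mul, smul_vecMul, vecMulVec_smul]
  have hinv : (W + vecMulVec u u)⁻¹ =
      W⁻¹ - ((u ⬝ᵥ u) / (ε * φ)) • (W⁻¹ * vecMulVec u u * W⁻¹) := by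
    refine inv_eq_right_inv ?_
    rw [Matrix.mul_sub, h₁, mul_smul_comm, h₂, smul_smul, div_mul_eq_mul_div, hscalar,
      div_self (mul_ne_zero hε hφ), one_smul, add_sub_cancel_right]
  rw [hinv, smul_sub, smul_smul, mul_div_assoc', mul_div_mul_left _ _ hε]

end RankOne

section Limits

variable {ι : Type*} [Fintype ι] [DecidableEq ι]

theorem tendsto_smul_inv_of_mulVec_eq_smul {l : Filter ℝ} (hl : l ≤ 𝓝[≠] 0)
    {S : ℝ → Matrix ι ι ℝ} {S₀ : Matrix ι ι ℝ} {u w₀ : ι → ℝ} {w : ℝ → ι → ℝ}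
    (hS : Tendsto S l (𝓝 S₀)) (hw : Tendsto w l (𝓝 w₀))
    (hSu : ∀ᶠ ε in l, S ε *ᵥ u = ε • w ε) (hS₀u : S₀ *ᵥ u = 0) (huS₀ : u ᵥ* S₀ = 0)
    (hW₀ : IsUnit (S₀ - vecMulVec u u).det) (huw : u ⬝ᵥ w₀ ≠ 0) :
    Tendsto (fun ε => ε • (S ε)⁻¹) l (𝓝 ((u ⬝ᵥ w₀)⁻¹ • vecMulVec u u)) := by
  set W₀ := S₀ - vecMulVec u u
  set c := u ⬝ᵥ u
  have hc : c ≠ 0 := fun h => huw (by rw [dotProduct_self_eq_zero.1 h, zero_dotProduct])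
  have hW₀u : W₀⁻¹ *ᵥ u = (-c)⁻¹ • u := inv_mulVec_eq_inv_smul hW₀ (neg_ne_zero.2 hc) (by
    simp [W₀, c, sub_mulVec, hS₀u, vecMulVec_mulVec])
  have huW₀ : u ᵥ* W₀⁻¹ = (-c)⁻¹ • u := vecMul_inv_eq_inv_smul hW₀ (neg_ne_zero.2 hc) (by
    simp [W₀, c, vecMul_sub, huS₀, vecMul_vecMulVec])
  set W := fun ε => S ε - vecMulVec u u
  have hWinv : Tendsto (fun ε => (W ε)⁻¹) l (𝓝 W₀⁻¹) := (hS.sub_const _).matrix_inv hW₀.ne_zero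
  have hWdet : ∀ᶠ ε in l, (W ε).det ≠ 0 :=
    ((continuous_id.matrix_det.tendsto W₀).comp (hS.sub_const _)).eventually_ne hW₀.ne_zero
  set φ₀ := (-c)⁻¹ * (u ⬝ᵥ w₀)
  have hφ₀ : φ₀ ≠ 0 := mul_ne_zero (inv_ne_zero (neg_ne_zero.2 hc)) huw
  have hφ : Tendsto (fun ε => u ⬝ᵥ ((W ε)⁻¹ *ᵥ w ε)) l (𝓝 φ₀) := by
    have h := ((by fun_prop : Continuous fun p : Matrix ι ι ℝ × (ι → ℝ) =>
      u ⬝ᵥ (p.1 *ᵥ p.2)).tendsto (W₀⁻¹, w₀)).comp (hWinv.prodMk_nhds hw)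
    rwa [dotProduct_mulVec, huW₀, smul_dotProduct, smul_eq_mul] at h
  have hformula : ∀ᶠ ε in l, ε • (S ε)⁻¹ = ε • (W ε)⁻¹ -
      (c / (u ⬝ᵥ ((W ε)⁻¹ *ᵥ w ε))) • ((W ε)⁻¹ * vecMulVec u u * (W ε)⁻¹) := by
    filter_upwards [hWdet, hSu, hφ.eventually_ne hφ₀, hl self_mem_nhdsWithin]
      with ε hWε hSε hφε hε
    simpa [W] using smul_inv_add_vecMulVec_self hWε.isUnit hε (by simpa [W] using hSε) hφε
  have hlim := ((tendsto_id.mono_left (hl.trans nhdsWithin_le_nhds)).smul hWinv).sub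
    (((tendsto_const_nhds (x := c)).div hφ hφ₀).smul
      (((by fun_prop : Continuous fun M : Matrix ι ι ℝ => M * vecMulVec u u * M).tendsto
        W₀⁻¹).comp hWinv))
  have hvalue : (u ⬝ᵥ w₀)⁻¹ • vecMulVec u u =
      (0 : ℝ) • W₀⁻¹ - (c / φ₀) • (W₀⁻¹ * vecMulVec u u * W₀⁻¹) := by
    rw [mul_vecMulVec, vecMulVec_mul, hW₀u, huW₀, smul_vecMulVec, vecMulVec_smul, smul_smul,
      smul_smul, zero_smul, zero_sub, ← neg_smul]
    congr 1
    simp only [φ₀]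
    field_simp
  rw [hvalue]
  exact hlim.congr' (hformula.mono fun _ h => h.symm)

variable {κ : Type*} [Fintype κ] [DecidableEq κ]

theorem tendsto_smul_inv_kronReduction_smul {B : Matrix (ι ⊕ κ) (ι ⊕ κ) ℝ} (hB : B.IsSymm)
    (hB1 : B *ᵥ 1 = 0) (hD : IsUnit B.toBlocks₂₂.det)
    (hW₀ : IsUnit (kronReduction B 0 - vecMulVec 1 1).det) {Q : Matrix κ κ ℝ}
    (hQ : 1 ⬝ᵥ (Q *ᵥ 1) ≠ 0) :
    Tendsto (fun ε : ℝ => ε • (kronReduction B (ε • Q))⁻¹) (𝓝[≠] 0)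
      (𝓝 ((1 ⬝ᵥ (Q *ᵥ 1))⁻¹ • vecMulVec 1 1)) := by
  set C := B.toBlocks₁₂
  set D := B.toBlocks₂₂
  have hDQ : Tendsto (fun ε : ℝ => D + ε • Q) (𝓝 0) (𝓝 D) := by
    simpa using (by fun_prop : Continuous fun ε : ℝ => D + ε • Q).tendsto 0
  have hinv := (hDQ.matrix_inv hD.ne_zero).mono_left (nhdsWithin_le_nhds (s := {0}ᶜ))
  have hS : Tendsto (fun ε : ℝ => kronReduction B (ε • Q)) (𝓝[≠] 0) (𝓝 (kronReduction B 0)) := by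
    unfold kronReduction
    rw [add_zero]
    exact ((by fun_prop : Continuous fun M : Matrix κ κ ℝ =>
      B.toBlocks₁₁ - C * M * B.toBlocks₂₁).tendsto D⁻¹).comp hinv
  have hw := ((by fun_prop : Continuous fun M : Matrix κ κ ℝ =>
    -(C * M) *ᵥ (Q *ᵥ 1)).tendsto D⁻¹).comp hinv
  have hSu : ∀ᶠ ε : ℝ in 𝓝[≠] 0,
      kronReduction B (ε • Q) *ᵥ 1 = ε • (-(C * (D + ε • Q)⁻¹) *ᵥ (Q *ᵥ 1)) := by
    have hdet := ((continuous_id.matrix_det.tendsto D).comp hDQ).eventually_ne hD.ne_zero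
    filter_upwards [nhdsWithin_le_nhds hdet] with ε hε
    rw [kronReduction_mulVec_one hB1 hε.isUnit, smul_mulVec, mulVec_smul]
  have hS₀ : kronReduction B 0 *ᵥ 1 = 0 := by
    simpa using kronReduction_mulVec_one (Q := 0) hB1 (by rwa [add_zero])
  have huw : 1 ⬝ᵥ (-(C * D⁻¹) *ᵥ (Q *ᵥ 1)) = 1 ⬝ᵥ (Q *ᵥ 1) := by
    rw [neg_mulVec, dotProduct_neg, dotProduct_mulVec, one_vecMul_toBlocks₁₂_mul_inv hB hB1 hD,
      neg_dotProduct, neg_neg]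
  rw [← huw]
  exact tendsto_smul_inv_of_mulVec_eq_smul le_rfl hS hw hSu hS₀
    (by rw [← mulVec_transpose, (hB.kronReduction isSymm_zero).eq, hS₀]) hW₀ (huw ▸ hQ)

end Limits

end Matrix

namespace IsSusceptance

variable {ι κ : Type*} [Fintype ι] [Fintype κ] [DecidableEq ι] [DecidableEq κ]
  {B : Matrix (ι ⊕ κ) (ι ⊕ κ) ℝ}

theorem posDef_neg_add_fromBlocks_smul_diagonal [Nonempty κ] (hB : IsSusceptance B)
    {k : κ → ℝ} (hk : ∀ i, k i < 0) {ε : ℝ} (hε : 0 < ε) :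
    (-B + fromBlocks 0 0 0 (-(ε • diagonal k))).PosDef := by
  rw [← diagonal_zero, ← diagonal_smul, diagonal_neg, fromBlocks_diagonal]
  refine hB.posDef_neg_add_diagonal (fun i => ?_) ?_
  · rcases i with i | i
    · simp
    · simpa using mul_nonpos_of_nonneg_of_nonpos hε.le (hk i).le
  · simpa [Fintype.sum_sum_type, ← Finset.mul_sum, hε.ne'] using
      (Finset.sum_neg (fun i _ => hk i) Finset.univ_nonempty).ne

theorem posDef_neg_add_fromBlocks_vecMulVec_one [Nonempty ι] (hB : IsSusceptance B) :
    (-B + fromBlocks (vecMulVec 1 1) 0 0 (0 : Matrix κ κ ℝ)).PosDef := by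
  have h : fromBlocks (vecMulVec 1 1) 0 0 (0 : Matrix κ κ ℝ) =
      vecMulVec (1 ⊕ᵥ 0 : ι ⊕ κ → ℝ) (1 ⊕ᵥ 0 : ι ⊕ κ → ℝ) := by
    ext (i | i) (j | j) <;> simp [vecMulVec_apply]
  rw [h]
  exact hB.posDef_neg_add_vecMulVec (by simp [Fintype.sum_sum_type])

end IsSusceptance

/-- Laurent-series leading term of the reduced susceptance inverse:
for `ε > 0` the matrix `B_{red,ε} = B_LL - B_LI (B_II + ε K_I)⁻¹ B_IL` is negative
definite (hence invertible), and `ε B_{red,ε}⁻¹ → (Σ_i K_i)⁻¹ 1_{n×n}` as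
`ε → 0⁺`. -/
theorem reduced_susceptance_laurent_leading_term {n m : ℕ} (hn : 0 < n) (hm : 0 < m)
    (B : Matrix (Fin n ⊕ Fin m) (Fin n ⊕ Fin m) ℝ) (hB : IsSusceptance B)
    (k : Fin m → ℝ) (hk : ∀ i, k i < 0) :
    (∀ ε : ℝ, 0 < ε →
      (-(B.toBlocks₁₁ -
        B.toBlocks₁₂ * (B.toBlocks₂₂ + ε • Matrix.diagonal k)⁻¹ *
          B.toBlocks₂₁)).PosDef) ∧
    Filter.Tendsto
      (fun ε : ℝ => ε •
        (B.toBlocks₁₁ -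
          B.toBlocks₁₂ * (B.toBlocks₂₂ + ε • Matrix.diagonal k)⁻¹ *
            B.toBlocks₂₁)⁻¹)
      (nhdsWithin 0 (Set.Ioi 0))
      (nhds ((∑ i, k i)⁻¹ • Matrix.of fun (_ : Fin n) (_ : Fin n) => (1 : ℝ))) := by
  have : Nonempty (Fin n) := ⟨⟨0, hn⟩⟩
  have : Nonempty (Fin m) := ⟨⟨0, hm⟩⟩
  have hpos₀ : (-B + fromBlocks (vecMulVec 1 1) 0 0 (-0)).PosDef := by
    rw [neg_zero]
    exact hB.posDef_neg_add_fromBlocks_vecMulVec_one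
  refine ⟨fun ε hε => ?_, ?_⟩
  · simpa [kronReduction] using
      posDef_sub_kronReduction hB.1 (hB.posDef_neg_add_fromBlocks_smul_diagonal hk hε)
  have hW₀ : IsUnit (kronReduction B 0 - vecMulVec 1 1).det := by
    rw [← isUnit_iff_isUnit_det, ← neg_sub, IsUnit.neg_iff]
    exact (posDef_sub_kronReduction hB.1 hpos₀).isUnit
  have hk1 : 1 ⬝ᵥ (diagonal k *ᵥ 1) = ∑ i, k i := by simp [mulVec_diagonal, one_dotProduct]
  have h := tendsto_smul_inv_kronReduction_smul hB.1 hB.mulVec_one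
    (by simpa using isUnit_det_toBlocks₂₂_add hpos₀) hW₀
    (hk1 ▸ (Finset.sum_neg (fun i _ => hk i) Finset.univ_nonempty).ne)
  rw [hk1] at h
  rw [show (of fun _ _ => 1 : Matrix (Fin n) (Fin n) ℝ) = vecMulVec 1 1 by
    ext; simp [vecMulVec_apply]]
  exact h.mono_left (nhdsGT_le_nhdsNE 0)
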